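/- arXiv:2211.15256 — 2 statements merged into one kernel-verified Lean document; each statement's English description precedes it below -/
import Mathlib

section
/- If φ ∈ Φ_w(Ω) and u ∈ BV^φ(Ω), then ‖u‖_{ρ_{V,φ}} ≤ V_φ(u) ≤ 2‖u‖_{ρ_{V,φ}}, where ‖u‖_{ρ_{V,φ}} := inf{ λ > 0 : ρ_{V,φ}(u/λ) ≤ 1 } is the Luxemburg seminorm of the dual modular. -/
open MeasureTheory Filter Set Topology Metric
open scoped ENNReal NNReal

noncomputable section

/-- Euclidean space `ℝⁿ`. -/
abbrev Euc (n : ℕ) := EuclideanSpace ℝ (Fin n)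

variable {n : ℕ}

/-- The divergence of a vector field on `ℝⁿ`. -/
def divg (w : Euc n → Euc n) (x : Euc n) : ℝ :=
  ∑ i, fderiv ℝ w x (EuclideanSpace.single i 1) i

/-- `C¹` vector fields with compact support contained in `Ω`. -/
def IsTestField (Ω : Set (Euc n)) (w : Euc n → Euc n) : Prop :=
  ContDiff ℝ 1 w ∧ HasCompactSupport w ∧ tsupport w ⊆ Ω

/-- `Ω` is a bounded domain. -/
def IsBoundedDomain (Ω : Set (Euc n)) : Prop :=
  IsOpen Ω ∧ IsConnected Ω ∧ Bornology.IsBounded Ω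

/-- The modular `ρ_φ(f) = ∫_Ω φ(x,|f(x)|) dx` for scalar functions. -/
def modular (Ω : Set (Euc n)) (φ : Euc n → ℝ → ℝ≥0∞) (f : Euc n → ℝ) : ℝ≥0∞ :=
  ∫⁻ x in Ω, φ x |f x|

/-- The modular `ρ_φ(|w|) = ∫_Ω φ(x,|w(x)|) dx` for vector-valued functions. -/
def vmodular (Ω : Set (Euc n)) (φ : Euc n → ℝ → ℝ≥0∞) (w : Euc n → Euc n) : ℝ≥0∞ :=
  ∫⁻ x in Ω, φ x ‖w x‖

/-- The conjugate Φ-function `φ*(x,t) = sup_{s ≥ 0} (st − φ(x,s))`. -/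
def conj (φ : Euc n → ℝ → ℝ≥0∞) (x : Euc n) (t : ℝ) : ℝ≥0∞ :=
  ⨆ s : {s : ℝ // 0 ≤ s}, ENNReal.ofReal ((s : ℝ) * t) - φ x (s : ℝ)

/-- The Luxemburg (quasi)norm of a scalar function. -/
def luxNorm (Ω : Set (Euc n)) (φ : Euc n → ℝ → ℝ≥0∞) (f : Euc n → ℝ) : ℝ≥0∞ :=
  ⨅ l ∈ {l : ℝ | 0 < l ∧ modular Ω φ (fun x => f x / l) ≤ 1}, ENNReal.ofReal l

/-- The Luxemburg (quasi)norm of a vector-valued function. -/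
def luxNormV (Ω : Set (Euc n)) (φ : Euc n → ℝ → ℝ≥0∞) (w : Euc n → Euc n) : ℝ≥0∞ :=
  ⨅ l ∈ {l : ℝ | 0 < l ∧ vmodular Ω φ (fun x => (l⁻¹ : ℝ) • w x) ≤ 1}, ENNReal.ofReal l

/-- The dual norm `V_φ(u)`. -/
def Vphi (Ω : Set (Euc n)) (φ : Euc n → ℝ → ℝ≥0∞) (u : Euc n → ℝ) : ℝ≥0∞ :=
  ⨆ w ∈ {w : Euc n → Euc n | IsTestField Ω w ∧ luxNormV Ω (conj φ) w ≤ 1},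
    ENNReal.ofReal (∫ x in Ω, u x * divg w x)

/-- The dual modular `ρ_{V,φ}(u)`. -/
def rhoV (Ω : Set (Euc n)) (φ : Euc n → ℝ → ℝ≥0∞) (u : Euc n → ℝ) : ℝ≥0∞ :=
  ⨆ w ∈ {w : Euc n → Euc n | IsTestField Ω w},
    (ENNReal.ofReal (∫ x in Ω, u x * divg w x) - vmodular Ω (conj φ) w)

/-- The recession function `φ'_∞(x) = limsup_{t→∞} φ(x,t)/t`. -/
def recession (φ : Euc n → ℝ → ℝ≥0∞) (x : Euc n) : ℝ≥0∞ :=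
  Filter.limsup (fun t : ℝ => φ x t / ENNReal.ofReal t) Filter.atTop

/-- `φ` is a weak Φ-function on `Ω`. -/
structure IsWeakPhi (Ω : Set (Euc n)) (φ : Euc n → ℝ → ℝ≥0∞) : Prop where
  meas : ∀ f : Euc n → ℝ, Measurable f → Measurable fun x => φ x |f x|
  mono : ∀ x ∈ Ω, ∀ s t : ℝ, 0 ≤ s → s ≤ t → φ x s ≤ φ x t
  zero : ∀ x ∈ Ω, φ x 0 = 0
  lim_zero : ∀ x ∈ Ω, Tendsto (φ x) (𝓝[>] (0 : ℝ)) (𝓝 0)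
  lim_top : ∀ x ∈ Ω, Tendsto (φ x) atTop (𝓝 ∞)
  aInc1 : ∃ L : ℝ≥0∞, 1 ≤ L ∧ ∀ x ∈ Ω, ∀ s t : ℝ, 0 < s → s ≤ t →
    φ x s / ENNReal.ofReal s ≤ L * (φ x t / ENNReal.ofReal t)

/-- `φ` is a convex Φ-function on `Ω`. -/
structure IsConvexPhi (Ω : Set (Euc n)) (φ : Euc n → ℝ → ℝ≥0∞)
    extends IsWeakPhi Ω φ : Prop where
  convex : ∀ x ∈ Ω, ∀ a b θ : ℝ, 0 ≤ a → 0 ≤ b → θ ∈ Icc (0 : ℝ) 1 →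
    φ x (θ * a + (1 - θ) * b) ≤ ENNReal.ofReal θ * φ x a + ENNReal.ofReal (1 - θ) * φ x b
  left_cont : ∀ x ∈ Ω, ∀ t : ℝ, 0 < t → Tendsto (φ x) (𝓝[<] t) (𝓝 (φ x t))

/-- The condition (A0). -/
def A0 (Ω : Set (Euc n)) (φ : Euc n → ℝ → ℝ≥0∞) : Prop :=
  ∃ β : ℝ, 0 < β ∧ β ≤ 1 ∧ ∀ x ∈ Ω, φ x β ≤ 1 ∧ 1 ≤ φ x β⁻¹

/-- The condition (A1). -/
def A1 (Ω : Set (Euc n)) (φ : Euc n → ℝ → ℝ≥0∞) : Prop :=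
  ∀ K : ℝ, 0 < K → ∃ β : ℝ, 0 < β ∧ β ≤ 1 ∧
    ∀ x ∈ Ω, ∀ y ∈ Ω, ∀ t : ℝ, 0 ≤ t →
      φ y t ≤ ENNReal.ofReal K / ENNReal.ofReal (dist x y ^ n) →
      φ x (β * t) ≤ φ y t + 1

/-- `ω` is a modulus of continuity. -/
def IsModulus (ω : ℝ → ℝ≥0∞) : Prop :=
  (∀ s t : ℝ, 0 ≤ s → s ≤ t → ω s ≤ ω t) ∧ ω 0 = 0 ∧ Tendsto ω (𝓝[>] (0 : ℝ)) (𝓝 0)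

/-- The (VA1) inequality for a given constant `K` and modulus of continuity `ω`. -/
def VA1With (Ω : Set (Euc n)) (φ : Euc n → ℝ → ℝ≥0∞) (K : ℝ) (ω : ℝ → ℝ≥0∞) : Prop :=
  ∀ x ∈ Ω, ∀ y ∈ Ω, ∀ t : ℝ, 0 ≤ t →
    φ y t ≤ ENNReal.ofReal K / ENNReal.ofReal (dist x y ^ n) →
    φ x (t * ((1 + ω (dist x y))⁻¹).toReal) ≤ φ y t + ω (dist x y)

/-- The condition (VA1). -/
def VA1 (Ω : Set (Euc n)) (φ : Euc n → ℝ → ℝ≥0∞) : Prop :=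
  ∀ K : ℝ, 0 < K → ∃ ω : ℝ → ℝ≥0∞, IsModulus ω ∧ VA1With Ω φ K ω

/-- The restricted (VA1) condition: (A1) together with the (VA1) inequality whenever
one of the two points has finite recession function. -/
def RestrictedVA1 (Ω : Set (Euc n)) (φ : Euc n → ℝ → ℝ≥0∞) : Prop :=
  A1 Ω φ ∧ ∀ K : ℝ, 0 < K → ∃ ω : ℝ → ℝ≥0∞, IsModulus ω ∧
    ∀ x ∈ Ω, ∀ y ∈ Ω, (recession φ x < ∞ ∨ recession φ y < ∞) →
      ∀ t : ℝ, 0 ≤ t →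
        φ y t ≤ ENNReal.ofReal K / ENNReal.ofReal (dist x y ^ n) →
        φ x (t * ((1 + ω (dist x y))⁻¹).toReal) ≤ φ y t + ω (dist x y)

/-- The condition (aDec)_q. -/
def aDecAt (Ω : Set (Euc n)) (φ : Euc n → ℝ → ℝ≥0∞) (q : ℝ) : Prop :=
  ∃ L : ℝ≥0∞, 1 ≤ L ∧ ∀ x ∈ Ω, ∀ s t : ℝ, 0 < s → s ≤ t →
    φ x t / ENNReal.ofReal (t ^ q) ≤ L * (φ x s / ENNReal.ofReal (s ^ q))

/-- The condition (aDec): (aDec)_q for some finite `q`. -/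
def aDec (Ω : Set (Euc n)) (φ : Euc n → ℝ → ℝ≥0∞) : Prop :=
  ∃ q : ℝ, aDecAt Ω φ q

/-- Membership in the generalized Orlicz space `L^φ(Ω)`. -/
def MemLphi (Ω : Set (Euc n)) (φ : Euc n → ℝ → ℝ≥0∞) (u : Euc n → ℝ) : Prop :=
  Measurable u ∧ ∃ l : ℝ, 0 < l ∧ modular Ω φ (fun x => l * u x) < ∞

/-- Membership in `BV^φ(Ω)`. -/
def MemBVphi (Ω : Set (Euc n)) (φ : Euc n → ℝ → ℝ≥0∞) (u : Euc n → ℝ) : Prop :=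
  MemLphi Ω φ u ∧ Integrable u (volume.restrict Ω) ∧
    luxNorm Ω φ u + Vphi Ω φ u < ∞

/-- `g` is the distributional (weak) gradient of `u` in `Ω`. -/
def HasWeakGradientOn (Ω : Set (Euc n)) (u : Euc n → ℝ) (g : Euc n → Euc n) : Prop :=
  ∀ w : Euc n → Euc n, IsTestField Ω w →
    ∫ x in Ω, u x * divg w x = -∫ x in Ω, (inner ℝ (g x) (w x) : ℝ)

/-- A decomposition `Du = ∇ᵃu·dx + σ·dν` of the derivative measure of a BV function `u`,
where `ν = |Dˢu|` is the total variation of the singular part and `σ` its polar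
(a unit vector field `ν`-a.e.). -/
def IsBVDecomp (Ω : Set (Euc n)) (u : Euc n → ℝ) (ga : Euc n → Euc n)
    (ν : Measure (Euc n)) (σ : Euc n → Euc n) : Prop :=
  Integrable u (volume.restrict Ω) ∧
  Integrable ga (volume.restrict Ω) ∧
  IsFiniteMeasure ν ∧ ν Ωᶜ = 0 ∧ Measure.MutuallySingular ν volume ∧
  (∀ᵐ x ∂ν, ‖σ x‖ = 1) ∧
  (∀ w : Euc n → Euc n, IsTestField Ω w →
    ∫ x in Ω, u x * divg w x =
      -((∫ x in Ω, (inner ℝ (ga x) (w x) : ℝ)) + ∫ x, (inner ℝ (σ x) (w x) : ℝ) ∂ν))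

/-- The Luxemburg seminorm generated by the dual modular `ρ_{V,φ}`. -/
def luxV (Ω : Set (Euc n)) (φ : Euc n → ℝ → ℝ≥0∞) (u : Euc n → ℝ) : ℝ≥0∞ :=
  ⨅ l ∈ {l : ℝ | 0 < l ∧ rhoV Ω φ (fun x => u x / l) ≤ 1}, ENNReal.ofReal l

/-! Since `φ ≥ 0`, `φ*(x, t/c) ≤ φ*(x, t)/c` for `c ≥ 1`, so a test field `w` with
`ρ_{φ*}(w) ≤ c` becomes admissible for `V_φ` after division by `c`; this gives `ρ_{V,φ}(u/λ) ≤ 1`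
as soon as `V_φ(u) ≤ λ`. Conversely, testing `ρ_{V,φ}(u/λ) ≤ 1` with `w/λ₀`, where
`ρ_{φ*}(w/λ₀) ≤ 1`, bounds `∫ u div w` by `2λλ₀`, and `λ₀` can be taken arbitrarily close to
`‖w‖_{φ*} ≤ 1`. -/

namespace ENNReal

lemma biInf_ofReal_le_of_forall {S : Set ℝ} {a : ℝ≥0∞}
    (h : ∀ l : ℝ, 0 < l → a ≤ ENNReal.ofReal l → l ∈ S) :
    ⨅ l ∈ S, ENNReal.ofReal l ≤ a := by
  refine le_of_forall_gt_imp_ge_of_dense fun c hac => ?_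
  rcases eq_or_ne c ∞ with rfl | hc
  · exact le_top
  have hc_pos : 0 < c.toReal := ENNReal.toReal_pos (pos_of_gt hac).ne' hc
  rw [← ENNReal.ofReal_toReal hc] at hac ⊢
  exact iInf₂_le _ (h _ hc_pos hac.le)

lemma le_mul_biInf_of_forall {ι : Type*} {S : Set ι} {f : ι → ℝ≥0∞} {a b : ℝ≥0∞}
    (hb₀ : b ≠ 0) (hb : b ≠ ∞) (h : ∀ i ∈ S, a ≤ b * f i) :
    a ≤ b * ⨅ i ∈ S, f i := by
  rw [mul_comm, ← ENNReal.div_le_iff hb₀ hb]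
  exact le_iInf₂ fun i hi => (ENNReal.div_le_iff hb₀ hb).2 <| by rw [mul_comm]; exact h i hi

end ENNReal

lemma IsTestField.const_smul {Ω : Set (Euc n)} {w : Euc n → Euc n} (hw : IsTestField Ω w)
    (c : ℝ) : IsTestField Ω (fun x => c • w x) := by
  obtain ⟨hC1, hcpt, hΩ⟩ := hw
  have hsub : tsupport (fun x => c • w x) ⊆ tsupport w := tsupport_smul_subset_right _ _
  exact ⟨hC1.const_smul c, hcpt.of_isClosed_subset (isClosed_tsupport _) hsub, hsub.trans hΩ⟩

lemma divg_const_smul {w : Euc n → Euc n} {x : Euc n} (hw : DifferentiableAt ℝ w x) (c : ℝ) :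
    divg (fun y => c • w y) x = c * divg w x := by
  simp only [divg, fderiv_fun_const_smul hw c, Finset.mul_sum]
  rfl

lemma integral_mul_divg_const_smul (Ω : Set (Euc n)) (u : Euc n → ℝ) {w : Euc n → Euc n}
    (hw : ContDiff ℝ 1 w) (c : ℝ) :
    ∫ x in Ω, u x * divg (fun y => c • w y) x = c * ∫ x in Ω, u x * divg w x := by
  simp_rw [divg_const_smul ((hw.differentiable one_ne_zero) _), mul_left_comm _ c]
  exact integral_const_mul c _

lemma integral_div_mul_divg (Ω : Set (Euc n)) (u : Euc n → ℝ) (w : Euc n → Euc n) (l : ℝ) :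
    ∫ x in Ω, u x / l * divg w x = l⁻¹ * ∫ x in Ω, u x * divg w x := by
  simp_rw [div_eq_inv_mul, mul_assoc]
  exact integral_const_mul l⁻¹ _

lemma conj_inv_mul_le (φ : Euc n → ℝ → ℝ≥0∞) (x : Euc n) {c : ℝ} (hc : 1 ≤ c) (t : ℝ) :
    conj φ x (c⁻¹ * t) ≤ conj φ x t / ENNReal.ofReal c := by
  have hC : 1 ≤ ENNReal.ofReal c := ENNReal.one_le_ofReal.2 hc
  refine iSup_le fun s => ?_
  have hscale : ENNReal.ofReal (s * (c⁻¹ * t)) = ENNReal.ofReal (s * t) / ENNReal.ofReal c := by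
    rw [← ENNReal.ofReal_div_of_pos (one_pos.trans_le hc)]
    ring_nf
  calc ENNReal.ofReal (s * (c⁻¹ * t)) - φ x s
      ≤ ENNReal.ofReal (s * t) / ENNReal.ofReal c - φ x s / ENNReal.ofReal c := by
        rw [hscale]
        exact tsub_le_tsub_left (ENNReal.div_le_of_le_mul (le_mul_of_one_le_right' hC)) _
    _ ≤ (ENNReal.ofReal (s * t) - φ x s) / ENNReal.ofReal c := by
        simp only [div_eq_mul_inv]
        exact le_tsub_mul
    _ ≤ conj φ x t / ENNReal.ofReal c := by
        gcongr
        exact le_iSup (fun s : {s : ℝ // 0 ≤ s} => ENNReal.ofReal (s * t) - φ x s) s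

lemma vmodular_conj_inv_smul_le (Ω : Set (Euc n)) (φ : Euc n → ℝ → ℝ≥0∞) (w : Euc n → Euc n)
    {c : ℝ} (hc : 1 ≤ c) :
    vmodular Ω (conj φ) (fun x => c⁻¹ • w x) ≤ vmodular Ω (conj φ) w / ENNReal.ofReal c := by
  have hnorm : ∀ x, ‖c⁻¹ • w x‖ = c⁻¹ * ‖w x‖ := fun x => by
    rw [norm_smul, Real.norm_of_nonneg (inv_nonneg.2 (zero_le_one.trans hc))]
  simp only [vmodular, hnorm, div_eq_mul_inv]
  rw [← lintegral_mul_const' _ _ (ENNReal.inv_ne_top.2 (ENNReal.ofReal_pos.2 (one_pos.trans_le hc)).ne')]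
  exact lintegral_mono fun x => conj_inv_mul_le φ x hc _

lemma luxNormV_le_one_of_vmodular_le_one {Ω : Set (Euc n)} {ψ : Euc n → ℝ → ℝ≥0∞}
    {w : Euc n → Euc n} (hw : vmodular Ω ψ w ≤ 1) : luxNormV Ω ψ w ≤ 1 := by
  refine (iInf₂_le (1 : ℝ) ⟨one_pos, ?_⟩).trans ENNReal.ofReal_one.le
  simpa only [inv_one, one_smul] using hw

section DualNorm

variable {Ω : Set (Euc n)} {φ : Euc n → ℝ → ℝ≥0∞} {u : Euc n → ℝ} {w : Euc n → Euc n}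

lemma ofReal_integral_le_Vphi_mul (hw : IsTestField Ω w) {c : ℝ} (hc : 1 ≤ c)
    (hwc : vmodular Ω (conj φ) w ≤ ENNReal.ofReal c) :
    ENNReal.ofReal (∫ x in Ω, u x * divg w x) ≤ Vphi Ω φ u * ENNReal.ofReal c := by
  have hc₀ : 0 < c := one_pos.trans_le hc
  have hadm : luxNormV Ω (conj φ) (fun x => c⁻¹ • w x) ≤ 1 :=
    luxNormV_le_one_of_vmodular_le_one <| (vmodular_conj_inv_smul_le Ω φ w hc).trans <|
      ENNReal.div_le_of_le_mul (by rwa [one_mul])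
  have htest : ENNReal.ofReal (∫ x in Ω, u x * divg (fun y => c⁻¹ • w y) x) ≤ Vphi Ω φ u :=
    le_iSup₂ (f := fun v (_ : v ∈ {v | IsTestField Ω v ∧ luxNormV Ω (conj φ) v ≤ 1}) =>
      ENNReal.ofReal (∫ x in Ω, u x * divg v x)) _ ⟨hw.const_smul c⁻¹, hadm⟩
  rwa [integral_mul_divg_const_smul Ω u hw.1, inv_mul_eq_div, ENNReal.ofReal_div_of_pos hc₀,
    ENNReal.div_le_iff (ENNReal.ofReal_pos.2 hc₀).ne' ENNReal.ofReal_ne_top] at htest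

lemma rhoV_div_le_one_of_Vphi_le {l : ℝ} (hl : 0 < l) (hV : Vphi Ω φ u ≤ ENNReal.ofReal l) :
    rhoV Ω φ (fun x => u x / l) ≤ 1 := by
  refine iSup₂_le fun w (hw : IsTestField Ω w) => ?_
  rw [tsub_le_iff_right]
  set m := vmodular Ω (conj φ) w
  rcases eq_or_ne m ∞ with hm | hm
  · simp [hm]
  have hc : ENNReal.ofReal (1 + m.toReal) = 1 + m := by
    rw [ENNReal.ofReal_add zero_le_one ENNReal.toReal_nonneg, ENNReal.ofReal_one,
      ENNReal.ofReal_toReal hm]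
  have hbound := ofReal_integral_le_Vphi_mul (u := u) hw (c := 1 + m.toReal)
    (by simp) (hc ▸ le_add_self)
  rw [integral_div_mul_divg, inv_mul_eq_div, ENNReal.ofReal_div_of_pos hl, ← hc,
    ENNReal.div_le_iff (ENNReal.ofReal_pos.2 hl).ne' ENNReal.ofReal_ne_top, mul_comm]
  exact hbound.trans (mul_le_mul_left hV _)

lemma ofReal_integral_le_of_rhoV_div_le_one {l l₀ : ℝ} (hl : 0 < l) (hl₀ : 0 < l₀)
    (hρ : rhoV Ω φ (fun x => u x / l) ≤ 1) (hw : IsTestField Ω w)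
    (hwl₀ : vmodular Ω (conj φ) (fun x => l₀⁻¹ • w x) ≤ 1) :
    ENNReal.ofReal (∫ x in Ω, u x * divg w x) ≤ 2 * ENNReal.ofReal l * ENNReal.ofReal l₀ := by
  have htest : ENNReal.ofReal (∫ x in Ω, u x / l * divg (fun y => l₀⁻¹ • w y) x)
      - vmodular Ω (conj φ) (fun x => l₀⁻¹ • w x) ≤ 1 :=
    (le_iSup₂ (f := fun v (_ : v ∈ {v | IsTestField Ω v}) =>
      ENNReal.ofReal (∫ x in Ω, u x / l * divg v x) - vmodular Ω (conj φ) v)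
      _ (hw.const_smul l₀⁻¹)).trans hρ
  have hll₀ : 0 < l * l₀ := mul_pos hl hl₀
  rw [tsub_le_iff_right, integral_div_mul_divg, integral_mul_divg_const_smul Ω u hw.1,
    ← mul_assoc, ← mul_inv, inv_mul_eq_div, ENNReal.ofReal_div_of_pos hll₀,
    ENNReal.div_le_iff (ENNReal.ofReal_pos.2 hll₀).ne' ENNReal.ofReal_ne_top,
    ENNReal.ofReal_mul hl.le] at htest
  calc ENNReal.ofReal (∫ x in Ω, u x * divg w x)
      ≤ (1 + 1) * (ENNReal.ofReal l * ENNReal.ofReal l₀) := htest.trans (by gcongr)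
    _ = 2 * ENNReal.ofReal l * ENNReal.ofReal l₀ := by rw [one_add_one_eq_two, mul_assoc]

lemma Vphi_le_two_mul_of_rhoV_div_le_one {l : ℝ} (hl : 0 < l)
    (hρ : rhoV Ω φ (fun x => u x / l) ≤ 1) :
    Vphi Ω φ u ≤ 2 * ENNReal.ofReal l := by
  refine iSup₂_le fun w ⟨hw, hwV⟩ => ?_
  calc ENNReal.ofReal (∫ x in Ω, u x * divg w x)
      ≤ 2 * ENNReal.ofReal l * luxNormV Ω (conj φ) w :=
        ENNReal.le_mul_biInf_of_forall (by simpa using hl) (by finiteness)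
          fun l₀ ⟨hl₀, hwl₀⟩ => ofReal_integral_le_of_rhoV_div_le_one hl hl₀ hρ hw hwl₀
    _ ≤ 2 * ENNReal.ofReal l := mul_le_of_le_one_right' hwV

end DualNorm

theorem statement6_general (n : ℕ) (Ω : Set (Euc n)) (φ : Euc n → ℝ → ℝ≥0∞) (u : Euc n → ℝ) :
    luxV Ω φ u ≤ Vphi Ω φ u ∧ Vphi Ω φ u ≤ 2 * luxV Ω φ u :=
  ⟨ENNReal.biInf_ofReal_le_of_forall fun _ hl hV => ⟨hl, rhoV_div_le_one_of_Vphi_le hl hV⟩,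
    ENNReal.le_mul_biInf_of_forall two_ne_zero ENNReal.ofNat_ne_top
      fun _ hl => Vphi_le_two_mul_of_rhoV_div_le_one hl.1 hl.2⟩

/-- If `φ ∈ Φ_w(Ω)` and `u ∈ BV^φ(Ω)`, then
`‖u‖_{ρ_{V,φ}} ≤ V_φ(u) ≤ 2‖u‖_{ρ_{V,φ}}`. -/
theorem statement6 (n : ℕ) (Ω : Set (Euc n)) (hΩ : IsBoundedDomain Ω)
    (φ : Euc n → ℝ → ℝ≥0∞) (hφ : IsWeakPhi Ω φ)
    (u : Euc n → ℝ) (hu : MemBVphi Ω φ u) :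
    luxV Ω φ u ≤ Vphi Ω φ u ∧ Vphi Ω φ u ≤ 2 * luxV Ω φ u :=
  statement6_general n Ω φ u

end
end

section
/- (Weak lower semicontinuity.) Let φ ∈ Φ_w(Ω) and let u, u_k ∈ L¹(Ω) with u_k ⇀ u weakly in L¹(Ω). Then V_φ(u) ≤ liminf_{k→∞} V_φ(u_k) and ρ_{V,φ}(u) ≤ liminf_{k→∞} ρ_{V,φ}(u_k). -/
open MeasureTheory Filter Set Topology Metric
open scoped ENNReal NNReal

noncomputable section

variable {n : ℕ}

theorem iSup₂_le_liminf_iSup₂ {α ι β : Type*} [CompleteLinearOrder β] [TopologicalSpace β]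
    [OrderTopology β] {l : Filter α} [l.NeBot] {p : ι → Prop} {F : ι → β} {G : α → ι → β}
    (h : ∀ i, p i → Tendsto (fun k => G k i) l (𝓝 (F i))) :
    ⨆ (i) (_ : p i), F i ≤ liminf (fun k => ⨆ (i) (_ : p i), G k i) l :=
  iSup₂_le fun i hi => (h i hi).liminf_eq ▸
    liminf_le_liminf (Eventually.of_forall fun k => le_iSup₂ (f := fun i (_ : p i) => G k i) i hi)

theorem continuous_divg {w : Euc n → Euc n} (hw : ContDiff ℝ 1 w) : Continuous (divg w) :=
  continuous_finsetSum _ fun i _ => (continuous_apply i).comp ((PiLp.continuous_ofLp 2 _).comp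
    ((ContinuousLinearMap.apply ℝ (Euc n) (EuclideanSpace.single i 1)).continuous.comp
      (hw.continuous_fderiv one_ne_zero)))

theorem HasCompactSupport.divg {w : Euc n → Euc n} (hw : HasCompactSupport w) :
    HasCompactSupport (divg w) :=
  hw.fderiv (𝕜 := ℝ) |>.comp_left
    (g := fun L : Euc n →L[ℝ] Euc n => ∑ i, L (EuclideanSpace.single i 1) i) (by simp)

theorem IsTestField.exists_abs_divg_le {Ω : Set (Euc n)} {w : Euc n → Euc n}
    (hw : IsTestField Ω w) : ∃ C : ℝ, ∀ x, |divg w x| ≤ C := by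
  obtain ⟨C, hC⟩ := hw.2.1.divg.exists_bound_of_continuous (continuous_divg hw.1)
  exact ⟨C, fun x => by simpa using hC x⟩

theorem IsTestField.tendsto_integral_mul_divg {Ω : Set (Euc n)} {u : Euc n → ℝ}
    {uk : ℕ → Euc n → ℝ}
    (hweak : ∀ g : Euc n → ℝ, Measurable g → (∃ C : ℝ, ∀ x, |g x| ≤ C) →
      Tendsto (fun k => ∫ x in Ω, uk k x * g x) atTop (𝓝 (∫ x in Ω, u x * g x)))
    {w : Euc n → Euc n} (hw : IsTestField Ω w) :
    Tendsto (fun k => ∫ x in Ω, uk k x * divg w x) atTop (𝓝 (∫ x in Ω, u x * divg w x)) :=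
  hweak _ (continuous_divg hw.1).measurable hw.exists_abs_divg_le

theorem statement7_general (n : ℕ) (Ω : Set (Euc n))
    (φ : Euc n → ℝ → ℝ≥0∞)
    (u : Euc n → ℝ) (uk : ℕ → Euc n → ℝ)
    (hweak : ∀ g : Euc n → ℝ, Measurable g → (∃ C : ℝ, ∀ x, |g x| ≤ C) →
      Tendsto (fun k => ∫ x in Ω, uk k x * g x) atTop (𝓝 (∫ x in Ω, u x * g x))) :
    Vphi Ω φ u ≤ Filter.liminf (fun k => Vphi Ω φ (uk k)) atTop ∧
    rhoV Ω φ u ≤ Filter.liminf (fun k => rhoV Ω φ (uk k)) atTop := by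
  have hdiv {w} (hw : IsTestField Ω w) :
      Tendsto (fun k => ENNReal.ofReal (∫ x in Ω, uk k x * divg w x)) atTop
        (𝓝 (ENNReal.ofReal (∫ x in Ω, u x * divg w x))) :=
    (ENNReal.continuous_ofReal.tendsto _).comp (hw.tendsto_integral_mul_divg hweak)
  exact ⟨iSup₂_le_liminf_iSup₂ fun w hw => hdiv hw.1,
    iSup₂_le_liminf_iSup₂ fun w hw => ((ENNReal.continuous_sub_right _).tendsto _).comp (hdiv hw)⟩

/-- Weak lower semicontinuity of `V_φ` and `ρ_{V,φ}` along sequences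
converging weakly in `L¹(Ω)`. -/
theorem statement7 (n : ℕ) (Ω : Set (Euc n)) (hΩ : IsBoundedDomain Ω)
    (φ : Euc n → ℝ → ℝ≥0∞) (hφ : IsWeakPhi Ω φ)
    (u : Euc n → ℝ) (uk : ℕ → Euc n → ℝ)
    (hu : Integrable u (volume.restrict Ω))
    (huk : ∀ k, Integrable (uk k) (volume.restrict Ω))
    (hweak : ∀ g : Euc n → ℝ, Measurable g → (∃ C : ℝ, ∀ x, |g x| ≤ C) →
      Tendsto (fun k => ∫ x in Ω, uk k x * g x) atTop (𝓝 (∫ x in Ω, u x * g x))) :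
    Vphi Ω φ u ≤ Filter.liminf (fun k => Vphi Ω φ (uk k)) atTop ∧
    rhoV Ω φ u ≤ Filter.liminf (fun k => rhoV Ω φ (uk k)) atTop :=
  statement7_general n Ω φ u uk hweak

end
end
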